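/- arXiv:2012.12625 — 2 statements merged into one kernel-verified Lean document; each statement's English description precedes it below -/
import Mathlib

section
/- Suppose 0 ≤ T, 0 ≤ Φ, N ≥ K − ε with 0 < ε < K, and 0 ≤ P ≤ 1. Then f₁(T,N,Φ) = ρ T P (1 − (T+N+Φ)/K) − α T √(1−P²) − β₁ N T ≤ (ρ ε/K − β₁(K−ε)) T. -/
theorem mul_le_of_le_of_nonneg_of_le_one {P x c : ℝ} (hP0 : 0 ≤ P) (hP1 : P ≤ 1)
    (hxc : x ≤ c) (hc : 0 ≤ c) : P * x ≤ c := by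
  rcases le_total 0 x with hx | hx
  · exact (mul_le_of_le_one_left hx hP1).trans hxc
  · exact (mul_nonpos_of_nonneg_of_nonpos hP0 hx).trans hc

theorem one_sub_div_le_of_sub_le {K ε T N Φ : ℝ} (hK : 0 < K) (hT : 0 ≤ T) (hΦ : 0 ≤ Φ)
    (hN : K - ε ≤ N) : 1 - (T + N + Φ) / K ≤ ε / K := by
  rw [sub_le_iff_le_add, ← add_div, le_div_iff₀ hK]
  linarith

theorem stmt_9_general (ρ α β₁ K ε : ℝ) (hρ : 0 < ρ) (hα : 0 < α) (hβ₁ : 0 < β₁)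
    (hK : 0 < K) (hε : 0 < ε)
    (T N Φ P : ℝ) (hT : 0 ≤ T) (hΦ : 0 ≤ Φ) (hN : K - ε ≤ N)
    (hP0 : 0 ≤ P) (hP1 : P ≤ 1) :
    ρ * T * P * (1 - (T + N + Φ) / K) - α * T * Real.sqrt (1 - P ^ 2) - β₁ * N * T ≤
      (ρ * ε / K - β₁ * (K - ε)) * T := by
  have growth : ρ * T * (P * (1 - (T + N + Φ) / K)) ≤ ρ * T * (ε / K) :=
    mul_le_mul_of_nonneg_left
      (mul_le_of_le_of_nonneg_of_le_one hP0 hP1 (one_sub_div_le_of_sub_le hK hT hΦ hN)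
        (div_nonneg hε.le hK.le))
      (mul_nonneg hρ.le hT)
  have damping : 0 ≤ α * T * Real.sqrt (1 - P ^ 2) := by positivity
  have predation : β₁ * (K - ε) * T ≤ β₁ * N * T := by gcongr
  calc ρ * T * P * (1 - (T + N + Φ) / K) - α * T * Real.sqrt (1 - P ^ 2) - β₁ * N * T
      ≤ ρ * T * (ε / K) - β₁ * (K - ε) * T := by
        linarith [mul_assoc (ρ * T) P (1 - (T + N + Φ) / K)]
    _ = (ρ * ε / K - β₁ * (K - ε)) * T := by ring

theorem stmt_9 (ρ α β₁ K ε : ℝ) (hρ : 0 < ρ) (hα : 0 < α) (hβ₁ : 0 < β₁)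
    (hK : 0 < K) (hε : 0 < ε) (hεK : ε < K)
    (T N Φ P : ℝ) (hT : 0 ≤ T) (hΦ : 0 ≤ Φ) (hN : K - ε ≤ N)
    (hP0 : 0 ≤ P) (hP1 : P ≤ 1) :
    ρ * T * P * (1 - (T + N + Φ) / K) - α * T * Real.sqrt (1 - P ^ 2) - β₁ * N * T ≤
      (ρ * ε / K - β₁ * (K - ε)) * T :=
  stmt_9_general ρ α β₁ K ε hρ hα hβ₁ hK hε T N Φ P hT hΦ hN hP0 hP1
end

section
/- If δ ≥ γ/K and 0 ≤ T ≤ K, 0 ≤ Φ ≤ K, N ≥ N₀^min > 0, 0 ≤ P ≤ 1, then f₃(T,N,Φ) = γ T √(1−P²)(Φ/K)(1 − (T+N+Φ)/K) − δ T Φ − β₂ N Φ ≤ −β₂ N₀^min Φ. -/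
lemma Real.sqrt_one_sub_sq_le_one (P : ℝ) : Real.sqrt (1 - P ^ 2) ≤ 1 :=
  Real.sqrt_le_one.mpr (by nlinarith [sq_nonneg P])

lemma logistic_growth_le {γ δ K s T Φ c : ℝ} (hγ : 0 ≤ γ) (hK : 0 < K) (hδγ : γ / K ≤ δ)
    (hs0 : 0 ≤ s) (hs1 : s ≤ 1) (hT : 0 ≤ T) (hΦ : 0 ≤ Φ) (hc : c ≤ 1) :
    γ * T * s * (Φ / K) * c ≤ δ * T * Φ :=
  calc γ * T * s * (Φ / K) * c
      ≤ γ * T * s * (Φ / K) := mul_le_of_le_one_right (by positivity) hc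
    _ = γ / K * s * (T * Φ) := by ring
    _ ≤ δ * 1 * (T * Φ) := by gcongr; linarith [div_nonneg hγ hK.le]
    _ = δ * T * Φ := by ring

theorem stmt_11_general (γ δ β₂ K Nmin : ℝ) (hγ : 0 < γ) (hβ₂ : 0 < β₂)
    (hK : 0 < K) (hδγ : γ / K ≤ δ) (hNmin : 0 < Nmin)
    (T N Φ P : ℝ) (hT : 0 ≤ T) (hΦ : 0 ≤ Φ)
    (hN : Nmin ≤ N) :
    γ * T * Real.sqrt (1 - P ^ 2) * (Φ / K) * (1 - (T + N + Φ) / K)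
        - δ * T * Φ - β₂ * N * Φ ≤ -(β₂ * Nmin * Φ) := by
  have hN0 : 0 ≤ N := hNmin.le.trans hN
  have hlogistic : 1 - (T + N + Φ) / K ≤ 1 := by
    have : 0 ≤ (T + N + Φ) / K := by positivity
    linarith
  have hgrowth := logistic_growth_le hγ.le hK hδγ (Real.sqrt_nonneg _)
    (Real.sqrt_one_sub_sq_le_one P) hT hΦ hlogistic
  have hdecay : β₂ * Nmin * Φ ≤ β₂ * N * Φ := by gcongr
  linarith

theorem stmt_11 (γ δ β₂ K Nmin : ℝ) (hγ : 0 < γ) (hδ : 0 < δ) (hβ₂ : 0 < β₂)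
    (hK : 0 < K) (hδγ : γ / K ≤ δ) (hNmin : 0 < Nmin)
    (T N Φ P : ℝ) (hT : 0 ≤ T) (hTK : T ≤ K) (hΦ : 0 ≤ Φ) (hΦK : Φ ≤ K)
    (hN : Nmin ≤ N) (hP0 : 0 ≤ P) (hP1 : P ≤ 1) :
    γ * T * Real.sqrt (1 - P ^ 2) * (Φ / K) * (1 - (T + N + Φ) / K)
        - δ * T * Φ - β₂ * N * Φ ≤ -(β₂ * Nmin * Φ) :=
  stmt_11_general γ δ β₂ K Nmin hγ hβ₂ hK hδγ hNmin T N Φ P hT hΦ hN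
end
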